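/- arXiv:2001.10148 — 3 statements merged into one kernel-verified Lean document; each statement's English description precedes it below -/
import Mathlib

section
/- If a sub-block of a process satisfies an existential execution property that is preserved under list concatenation on either side and under interleaving, then the whole structured process satisfies that property. Concretely: let Φ be a predicate on lists of tasks such that Φ(ε) implies Φ(δ ++ ε) and Φ(ε ++ δ) for all δ, and such that Φ(ε) implies Φ(c) for any interleaving c of ε with another list that places the other list entirely before or after ε. Then for any process block P built from SEQ, XOR and AND constructors from basic tasks, if some sub-block B of P has an execution satisfying Φ, then P has an execution satisfying Φ. -/
inductive Interleave {α : Type*} : List α → List α → List α → Prop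
  | nil : Interleave [] [] []
  | left {x : α} {a b c : List α} : Interleave a b c → Interleave (x :: a) b (x :: c)
  | right {x : α} {a b c : List α} : Interleave a b c → Interleave a (x :: b) (x :: c)

/-- Structured process blocks built from tasks via SEQ, XOR and AND. -/
inductive PB (τ : Type*) where
  | task : τ → PB τ
  | seq : PB τ → PB τ → PB τ
  | xor : PB τ → PB τ → PB τ
  | and : PB τ → PB τ → PB τ

/-- Executions of a process block, as lists of tasks. -/
inductive Exec {τ : Type*} : PB τ → List τ → Prop
  | task (t : τ) : Exec (.task t) [t]
  | seq {B1 B2 : PB τ} {a b : List τ} : Exec B1 a → Exec B2 b → Exec (.seq B1 B2) (a ++ b)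
  | xorL {B1 B2 : PB τ} {a : List τ} : Exec B1 a → Exec (.xor B1 B2) a
  | xorR {B1 B2 : PB τ} {b : List τ} : Exec B2 b → Exec (.xor B1 B2) b
  | and {B1 B2 : PB τ} {a b c : List τ} :
      Exec B1 a → Exec B2 b → Interleave a b c → Exec (.and B1 B2) c

/-- `SubBlock B P`: `B` occurs in the inductive construction of `P`. -/
inductive SubBlock {τ : Type*} : PB τ → PB τ → Prop
  | refl (B : PB τ) : SubBlock B B
  | seqL {B P Q : PB τ} : SubBlock B P → SubBlock B (.seq P Q)
  | seqR {B P Q : PB τ} : SubBlock B Q → SubBlock B (.seq P Q)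
  | xorL {B P Q : PB τ} : SubBlock B P → SubBlock B (.xor P Q)
  | xorR {B P Q : PB τ} : SubBlock B Q → SubBlock B (.xor P Q)
  | andL {B P Q : PB τ} : SubBlock B P → SubBlock B (.and P Q)
  | andR {B P Q : PB τ} : SubBlock B Q → SubBlock B (.and P Q)


lemma interleave_append {α : Type*} : ∀ (a b : List α), Interleave a b (a ++ b)
  | [], [] => .nil
  | [], x :: b => .right (interleave_append [] b)
  | x :: a, b => .left (interleave_append a b)

lemma exec_exists {τ : Type*} : ∀ (P : PB τ), ∃ ε, Exec P ε
  | .task t => ⟨[t], .task t⟩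
  | .seq P Q => by
      obtain ⟨a, ha⟩ := exec_exists P; obtain ⟨b, hb⟩ := exec_exists Q
      exact ⟨a ++ b, .seq ha hb⟩
  | .xor P Q => by
      obtain ⟨a, ha⟩ := exec_exists P
      exact ⟨a, .xorL ha⟩
  | .and P Q => by
      obtain ⟨a, ha⟩ := exec_exists P; obtain ⟨b, hb⟩ := exec_exists Q
      exact ⟨a ++ b, .and ha hb (interleave_append a b)⟩

theorem subblock_property_lifts {τ : Type*} (Φ : List τ → Prop)
    (hpre : ∀ δ ε : List τ, Φ ε → Φ (δ ++ ε))
    (hpost : ∀ ε δ : List τ, Φ ε → Φ (ε ++ δ))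
    (hinter : ∀ ε δ c : List τ, Φ ε → (c = δ ++ ε ∨ c = ε ++ δ) → Φ c)
    (P B : PB τ) (hsub : SubBlock B P)
    (hB : ∃ ε, Exec B ε ∧ Φ ε) :
    ∃ ε, Exec P ε ∧ Φ ε := by
  induction hsub with
  | refl => exact hB
  | seqL h ih =>
      obtain ⟨a, ha, hΦ⟩ := ih
      rename_i P Q
      obtain ⟨b, hb⟩ := exec_exists Q
      exact ⟨a ++ b, .seq ha hb, hpost a b hΦ⟩
  | seqR h ih =>
      obtain ⟨b, hb, hΦ⟩ := ih
      rename_i P Q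
      obtain ⟨a, ha⟩ := exec_exists P
      exact ⟨a ++ b, .seq ha hb, hpre a b hΦ⟩
  | xorL h ih =>
      obtain ⟨a, ha, hΦ⟩ := ih
      exact ⟨a, .xorL ha, hΦ⟩
  | xorR h ih =>
      obtain ⟨b, hb, hΦ⟩ := ih
      exact ⟨b, .xorR hb, hΦ⟩
  | andL h ih =>
      obtain ⟨a, ha, hΦ⟩ := ih
      rename_i P Q
      obtain ⟨b, hb⟩ := exec_exists Q
      exact ⟨a ++ b, .and ha hb (interleave_append a b), hinter a b _ hΦ (Or.inr rfl)⟩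
  | andR h ih =>
      obtain ⟨b, hb, hΦ⟩ := ih
      rename_i P Q
      obtain ⟨a, ha⟩ := exec_exists P
      exact ⟨a ++ b, .and ha hb (interleave_append a b), hinter b a _ hΦ (Or.inl rfl)⟩
end

section
/- Simplification of the second maintenance Δ-constraint: for a finite execution ε whose last task is annotated with d, the condition “there exists an index j with t annotated such that for every index k ≥ j with d annotated there exists m with j ≤ m < k and ¬r annotated at m” is equivalent to the condition “there exists an index j with t annotated and an index i ≥ j with ¬r annotated at i such that no index m with j ≤ m ≤ i carries d” — provided that ¬r and d never occur at a common index under the relevant orderings as implied by the quantifier structure. -/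
inductive Lit (α : Type*) where
  | pos : α → Lit α
  | neg : α → Lit α

def Lit.compl {α : Type*} : Lit α → Lit α
  | .pos a => .neg a
  | .neg a => .pos a

/-- The annotation set at index `i` of an execution (a list of annotated tasks,
each identified with its annotation set). -/
def annAt {α : Type*} (ε : List (Set (Lit α))) (i : ℕ) : Set (Lit α) := ε.getD i ∅

/-- Annotations are consistent: no task carries a literal and its complement. -/
def ConsistentExec {α : Type*} (ε : List (Set (Lit α))) : Prop :=
  ∀ i, ∀ l ∈ annAt ε i, l.compl ∉ annAt ε i

theorem maintenance_delta2_simplified {α : Type*} (r t d : α) (ε : List (Set (Lit α)))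
    (hne : ε ≠ [])
    (hfinal : Lit.pos d ∈ annAt ε (ε.length - 1))
    (hsep : ∀ m, m < ε.length → ¬(Lit.neg r ∈ annAt ε m ∧ Lit.pos d ∈ annAt ε m)) :
    (∃ j, j < ε.length ∧ Lit.pos t ∈ annAt ε j ∧
      ∀ k, j ≤ k → k < ε.length → Lit.pos d ∈ annAt ε k →
        ∃ m, j ≤ m ∧ m < k ∧ Lit.neg r ∈ annAt ε m) ↔
    (∃ j, j < ε.length ∧ Lit.pos t ∈ annAt ε j ∧
      ∃ i, j ≤ i ∧ i < ε.length ∧ Lit.neg r ∈ annAt ε i ∧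
        ∀ m, j ≤ m → m ≤ i → Lit.pos d ∉ annAt ε m) := by
  have hlen : 0 < ε.length := List.length_pos_iff.mpr hne
  constructor
  · rintro ⟨j, hj, ht, hprop⟩
    refine ⟨j, hj, ht, ?_⟩
    have hex : ∃ n, j ≤ n ∧ n < ε.length ∧ Lit.neg r ∈ annAt ε n := by
      obtain ⟨m, hm1, hm2, hm3⟩ := hprop (ε.length - 1)
        (Nat.le_sub_one_of_lt hj) (Nat.sub_lt hlen one_pos) hfinal
      exact ⟨m, hm1, lt_trans hm2 (Nat.sub_lt hlen one_pos), hm3⟩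
    classical
    obtain ⟨hi1, hi2, hi3⟩ := Nat.find_spec hex
    refine ⟨Nat.find hex, hi1, hi2, hi3, ?_⟩
    intro m hm1 hm2 hd
    obtain ⟨m', hm'1, hm'2, hm'3⟩ := hprop m hm1 (lt_of_le_of_lt hm2 hi2) hd
    have : m' < Nat.find hex := lt_of_lt_of_le hm'2 hm2
    exact Nat.find_min hex this ⟨hm'1, lt_trans this hi2, hm'3⟩
  · rintro ⟨j, hj, ht, i, hi1, hi2, hi3, hnod⟩
    refine ⟨j, hj, ht, ?_⟩
    intro k hk1 _ hdk
    refine ⟨i, hi1, ?_, hi3⟩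
    by_contra h
    exact hnod k hk1 (Nat.le_of_not_lt h) hdk
end

section
/- The stem-pruning lemma: let P be a structured process (built inductively from tasks via SEQ, XOR, AND), and let τ be a task occurring exactly once in P. Let P' be obtained from P by replacing every XOR block on the path from the root to τ by its unique child containing τ. Then (1) every execution of P' contains τ, and (2) the executions of P containing τ are exactly the executions of P'. -/
/-- The list of tasks occurring in a process block. -/
def PB.tasks {τ : Type*} : PB τ → List τ
  | .task t => [t]
  | .seq P Q => P.tasks ++ Q.tasks
  | .xor P Q => P.tasks ++ Q.tasks
  | .and P Q => P.tasks ++ Q.tasks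

/-- `Prunes t P P'`: `P'` is obtained from `P` by replacing every XOR block on the
path from the root to the (unique) occurrence of the task `t` by its child
containing `t`; all other structure is unchanged. -/
inductive Prunes {τ : Type*} (t : τ) : PB τ → PB τ → Prop
  | task : Prunes t (.task t) (.task t)
  | seqL {P P' Q : PB τ} : t ∈ P.tasks → Prunes t P P' → Prunes t (.seq P Q) (.seq P' Q)
  | seqR {P Q Q' : PB τ} : t ∈ Q.tasks → Prunes t Q Q' → Prunes t (.seq P Q) (.seq P Q')
  | andL {P P' Q : PB τ} : t ∈ P.tasks → Prunes t P P' → Prunes t (.and P Q) (.and P' Q)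
  | andR {P Q Q' : PB τ} : t ∈ Q.tasks → Prunes t Q Q' → Prunes t (.and P Q) (.and P Q')
  | xorL {P P' Q : PB τ} : t ∈ P.tasks → Prunes t P P' → Prunes t (.xor P Q) P'
  | xorR {P Q Q' : PB τ} : t ∈ Q.tasks → Prunes t Q Q' → Prunes t (.xor P Q) Q'


/-! Pruning only removes XOR alternatives, so every execution of `P'` is one of `P`; each of
them runs through the stem of XOR-free blocks down to `t`, so it contains `t`. Conversely, an
execution of `P` containing `t` can only have chosen, at each XOR on the stem, the branch that
holds `t`: since `t` occurs once in `P`, the other branch has no execution containing `t`. -/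

section

variable {τ : Type*}

theorem List.append_subset_append {α : Type*} {l₁ l₂ l₃ l₄ : List α} (h₁ : l₁ ⊆ l₃)
    (h₂ : l₂ ⊆ l₄) : l₁ ++ l₂ ⊆ l₃ ++ l₄ :=
  List.append_subset.mpr
    ⟨fun _ h => List.mem_append_left _ (h₁ h), fun _ h => List.mem_append_right _ (h₂ h)⟩

theorem Interleave.perm {α : Type*} {a b c : List α} (h : Interleave a b c) :
    c.Perm (a ++ b) := by
  induction h with
  | nil => exact .nil
  | left _ ih => exact ih.cons _
  | right _ ih => exact (ih.cons _).trans List.perm_middle.symm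

theorem Exec.subset_tasks {P : PB τ} {ε : List τ} (h : Exec P ε) : ε ⊆ P.tasks := by
  induction h with
  | task t => exact List.Subset.refl _
  | seq _ _ ih₁ ih₂ => exact List.append_subset_append ih₁ ih₂
  | xorL _ ih => exact List.Subset.trans ih (List.subset_append_left _ _)
  | xorR _ ih => exact List.Subset.trans ih (List.subset_append_right _ _)
  | and _ _ hi ih₁ ih₂ =>
    exact List.Subset.trans hi.perm.subset (List.append_subset_append ih₁ ih₂)

namespace Prunes

variable {t : τ} {P P' : PB τ}

theorem mem_of_exec (hp : Prunes t P P') {ε : List τ} (he : Exec P' ε) : t ∈ ε := by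
  induction hp generalizing ε with
  | task => cases he; exact List.mem_singleton_self t
  | seqL _ _ ih => cases he with
    | seq h₁ _ => exact List.mem_append_left _ (ih h₁)
  | seqR _ _ ih => cases he with
    | seq _ h₂ => exact List.mem_append_right _ (ih h₂)
  | andL _ _ ih => cases he with
    | and h₁ _ hi => exact hi.perm.mem_iff.mpr (List.mem_append_left _ (ih h₁))
  | andR _ _ ih => cases he with
    | and _ h₂ hi => exact hi.perm.mem_iff.mpr (List.mem_append_right _ (ih h₂))
  | xorL _ _ ih => exact ih he
  | xorR _ _ ih => exact ih he

theorem exec_of_exec (hp : Prunes t P P') {ε : List τ} (he : Exec P' ε) : Exec P ε := by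
  induction hp generalizing ε with
  | task => exact he
  | seqL _ _ ih => cases he with
    | seq h₁ h₂ => exact .seq (ih h₁) h₂
  | seqR _ _ ih => cases he with
    | seq h₁ h₂ => exact .seq h₁ (ih h₂)
  | andL _ _ ih => cases he with
    | and h₁ h₂ hi => exact .and (ih h₁) h₂ hi
  | andR _ _ ih => cases he with
    | and h₁ h₂ hi => exact .and h₁ (ih h₂) hi
  | xorL _ _ ih => exact .xorL (ih he)
  | xorR _ _ ih => exact .xorR (ih he)

theorem exec_of_exec_of_mem (hp : Prunes t P P') (hnd : P.tasks.Nodup) {ε : List τ}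
    (he : Exec P ε) (htε : t ∈ ε) : Exec P' ε := by
  induction hp generalizing ε with
  | task => exact he
  | seqL hm _ ih => cases he with
    | seq h₁ h₂ =>
      rcases List.mem_append.mp htε with h | h
      · exact .seq (ih hnd.of_append_left h₁ h) h₂
      · exact (List.disjoint_of_nodup_append hnd hm (h₂.subset_tasks h)).elim
  | seqR hm _ ih => cases he with
    | seq h₁ h₂ =>
      rcases List.mem_append.mp htε with h | h
      · exact (List.disjoint_of_nodup_append hnd (h₁.subset_tasks h) hm).elim
      · exact .seq h₁ (ih hnd.of_append_right h₂ h)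
  | andL hm _ ih => cases he with
    | and h₁ h₂ hi =>
      rcases List.mem_append.mp (hi.perm.mem_iff.mp htε) with h | h
      · exact .and (ih hnd.of_append_left h₁ h) h₂ hi
      · exact (List.disjoint_of_nodup_append hnd hm (h₂.subset_tasks h)).elim
  | andR hm _ ih => cases he with
    | and h₁ h₂ hi =>
      rcases List.mem_append.mp (hi.perm.mem_iff.mp htε) with h | h
      · exact (List.disjoint_of_nodup_append hnd (h₁.subset_tasks h) hm).elim
      · exact .and h₁ (ih hnd.of_append_right h₂ h) hi
  | xorL hm _ ih => cases he with
    | xorL h => exact ih hnd.of_append_left h htε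
    | xorR h => exact (List.disjoint_of_nodup_append hnd hm (h.subset_tasks htε)).elim
  | xorR hm _ ih => cases he with
    | xorL h => exact (List.disjoint_of_nodup_append hnd (h.subset_tasks htε) hm).elim
    | xorR h => exact ih hnd.of_append_right h htε

end Prunes

end

theorem stem_pruning_general {τ : Type*} (P P' : PB τ) (t : τ)
    (hnd : P.tasks.Nodup) (hp : Prunes t P P') :
    (∀ ε, Exec P' ε → t ∈ ε) ∧
    (∀ ε, (Exec P ε ∧ t ∈ ε) ↔ Exec P' ε) :=
  ⟨fun _ => hp.mem_of_exec, fun _ =>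
    ⟨fun ⟨he, htε⟩ => hp.exec_of_exec_of_mem hnd he htε,
      fun he => ⟨hp.exec_of_exec he, hp.mem_of_exec he⟩⟩⟩

theorem stem_pruning {τ : Type*} (P P' : PB τ) (t : τ)
    (hnd : P.tasks.Nodup) (ht : t ∈ P.tasks) (hp : Prunes t P P') :
    (∀ ε, Exec P' ε → t ∈ ε) ∧
    (∀ ε, (Exec P ε ∧ t ∈ ε) ↔ Exec P' ε) :=
  stem_pruning_general P P' t hnd hp
end
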